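/- Let A be a ℚ-vector space and n ≥ 2. Every μ ∈ 𝓜_n(A) is a polynomial of degree at most n in additive functionals: there exist Φ_j ∈ Σ_j(A) for j = 1, …, n such that μ(x) = Σ_{j=1}^{n} Φ_j(x, …, x) for all x ∈ A (the j = 1 term being an additive map A → ℂ), and these homogeneous components Φ_j are uniquely determined by μ. -/

import Mathlib

open Finset

/-- The `k`-th interference functional of `μ`:
`I^μ_k(a₁,…,a_k) = Σ_S (−1)^{k−|S|} μ(Σ_{i∈S} a_i)`, where `S` ranges over
non-empty subsets of `{1,…,k}`. -/
noncomputable def interference {A : Type*} [AddCommGroup A] (μ : A → ℂ) {k : ℕ}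
    (a : Fin k → A) : ℂ :=
  ∑ S ∈ (Finset.univ : Finset (Fin k)).powerset.filter (fun S => S.Nonempty),
    (-1 : ℂ) ^ (k - S.card) * μ (∑ i ∈ S, a i)

/-- `μ ∈ 𝓜_n(A)`: the order-`n` sum rule
`μ(a₁+⋯+a_{n+1}) = Σ_S (−1)^{n−|S|} μ(Σ_{i∈S} a_i)`, with `S` running over the
subsets of `{1,…,n+1}` satisfying `1 ≤ |S| ≤ n`. -/
def MemMeasureSpace {A : Type*} [AddCommGroup A] (n : ℕ) (μ : A → ℂ) : Prop :=
  ∀ a : Fin (n + 1) → A,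
    μ (∑ i, a i) =
      ∑ S ∈ (Finset.univ : Finset (Fin (n + 1))).powerset.filter
          (fun S => S.Nonempty ∧ S.card ≤ n),
        (-1 : ℂ) ^ (n - S.card) * μ (∑ i ∈ S, a i)

/-- Total symmetry of a functional of `n` arguments. -/
def IsTotallySymmetric {A : Type*} {n : ℕ} (Φ : (Fin n → A) → ℂ) : Prop :=
  ∀ (σ : Equiv.Perm (Fin n)) (a : Fin n → A), Φ (a ∘ σ) = Φ a

/-- Additivity in each argument of a functional of `n` arguments. -/
def IsMultiadditive {A : Type*} [AddCommGroup A] {n : ℕ} (Φ : (Fin n → A) → ℂ) : Prop :=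
  ∀ (i : Fin n) (a : Fin n → A) (x y : A),
    Φ (Function.update a i (x + y)) =
      Φ (Function.update a i x) + Φ (Function.update a i y)

/-- The polarization map
`Π_n(μ)(a₁,…,a_n) = (1/(2ⁿ n!)) Σ_{z∈{1,−1}ⁿ} z₁⋯z_n · μ(z₁a₁+⋯+z_n a_n)`,
the sum running over all sign choices `z ∈ {1,−1}ⁿ`. -/
noncomputable def polarization {A : Type*} [AddCommGroup A] (μ : A → ℂ) {n : ℕ}
    (a : Fin n → A) : ℂ :=
  (1 / (2 ^ n * n.factorial : ℂ)) *
    ∑ z : Fin n → Bool,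
      (∏ i, if z i then (1 : ℂ) else -1) * μ (∑ i, if z i then a i else -a i)

/-!
Write `Δ_{a₁} ⋯ Δ_{a_k} μ (0)` for the mixed finite difference of `μ`; it is the signed sum of `μ`
over the subsums of `a₁, …, a_k`, and the defining identity of `𝓜_n(A)` says precisely that it
vanishes for `k = n + 1` (and that `μ 0 = 0`). Vanishing of the differences of order `k + 1` makes
the difference of order `k` additive in each argument, so `Φ = Δⁿ μ / n!` is symmetric and
multiadditive, and `μ x - Φ(x, …, x)` has vanishing differences of order `n`: induction on `n`
gives the decomposition. For a multiadditive `Φ` of arity `k`, the `m`-th mixed difference of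
`x ↦ Φ(x, …, x)` is the sum of `Φ(a ∘ r)` over the surjections `r : Fin k → Fin m`, so it is
`k! Φ` if `m = k` and `Φ` is symmetric, and `0` if `m > k`. Hence the top component of a
decomposition is `Δⁿ μ / n!`, which gives uniqueness by the same induction.
-/

open fwdDiff
open scoped Nat

theorem Finset.sum_powerset_map {α β M : Type*} [AddCommMonoid M] (e : α ↪ β) (s : Finset α)
    (f : Finset β → M) : ∑ t ∈ (s.map e).powerset, f t = ∑ t ∈ s.powerset, f (t.map e) := by
  have : (s.map e).powerset = s.powerset.map ⟨(·.map e), Finset.map_injective e⟩ := by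
    ext t
    simp [Finset.subset_map_iff, eq_comm]
  rw [this, sum_map]
  rfl

theorem Finset.sum_superset_neg_one_pow {α R : Type*} [Fintype α] [DecidableEq α] [Ring R]
    (s : Finset α) :
    ∑ t ∈ (univ : Finset α).powerset with s ⊆ t, (-1 : R) ^ (Fintype.card α - #t) =
      if s = univ then 1 else 0 := by
  have hcompl : ∑ t ∈ (univ : Finset α).powerset with s ⊆ t, (-1 : R) ^ (Fintype.card α - #t) =
      ∑ t ∈ sᶜ.powerset, (-1 : R) ^ #t := by
    refine sum_nbij' (·ᶜ) (·ᶜ) ?_ ?_ (fun S _ => compl_compl S) (fun T _ => compl_compl T) ?_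
    · intro S hS
      simpa using (mem_filter.1 hS).2
    · intro T hT
      simpa [subset_compl_comm] using mem_powerset.1 hT
    · intro S _
      rw [card_compl]
  have hsign := congrArg (Int.cast : ℤ → R) (sum_powerset_neg_one_pow_card (x := sᶜ))
  push_cast at hsign
  rw [hcompl, hsign]
  simp only [compl_eq_empty_iff]

section MixedDiff

variable {A : Type*} [AddCommGroup A]

/-- `Δ_{a₁} ⋯ Δ_{a_k} μ (0)` (see `mixedDiff_insertNth`). It differs from `interference μ a` by
the term `(-1) ^ k * μ 0` of `S = ∅`. -/
noncomputable def mixedDiff (μ : A → ℂ) {k : ℕ} (a : Fin k → A) : ℂ :=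
  ∑ S ∈ (univ : Finset (Fin k)).powerset, (-1 : ℂ) ^ (k - #S) * μ (∑ i ∈ S, a i)

theorem mixedDiff_zero_arity (μ : A → ℂ) (a : Fin 0 → A) : mixedDiff μ a = μ 0 := by
  simp [mixedDiff]

theorem mixedDiff_insertNth (μ : A → ℂ) {k : ℕ} (p : Fin (k + 1)) (b : A) (c : Fin k → A) :
    mixedDiff μ (Fin.insertNth p b c) = mixedDiff (Δ_[b] μ) c := by
  have hp : p ∉ univ.map p.succAboveEmb := by simp
  rw [mixedDiff, Fin.univ_succAbove k p, cons_eq_insert, sum_powerset_insert hp,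
    sum_powerset_map, sum_powerset_map, ← sum_add_distrib]
  refine sum_congr rfl fun T hT => ?_
  have hpT : p ∉ T.map p.succAboveEmb := by simp
  have hTk : #T ≤ k := by simpa using card_le_card (mem_powerset.1 hT)
  have hsum : ∑ i ∈ T.map p.succAboveEmb, Fin.insertNth p b c i = ∑ i ∈ T, c i := by
    simp
  rw [sum_insert hpT, hsum, card_insert_of_notMem hpT, card_map, Fin.insertNth_apply_same,
    Nat.succ_sub hTk, Nat.add_sub_add_right, pow_succ, fwdDiff, add_comm b]
  ring

theorem mixedDiff_cons (μ : A → ℂ) {k : ℕ} (b : A) (c : Fin k → A) :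
    mixedDiff μ (Fin.cons b c) = mixedDiff (Δ_[b] μ) c := by
  rw [← Fin.insertNth_zero', mixedDiff_insertNth]

theorem mixedDiff_cons_zero (μ : A → ℂ) {k : ℕ} (c : Fin k → A) :
    mixedDiff μ (Fin.cons 0 c) = 0 := by
  have hΔ : Δ_[(0 : A)] μ = 0 := funext fun x => by simp [fwdDiff]
  rw [mixedDiff_cons, hΔ]
  simp [mixedDiff]

theorem fwdDiff_add_step (μ : A → ℂ) (x y : A) :
    Δ_[x + y] μ = Δ_[x] μ + Δ_[y] μ + Δ_[y] (Δ_[x] μ) := by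
  funext t
  simp only [fwdDiff, Pi.add_apply, add_right_comm t y x, ← add_assoc]
  ring

theorem mixedDiff_add (f g : A → ℂ) {k : ℕ} (a : Fin k → A) :
    mixedDiff (f + g) a = mixedDiff f a + mixedDiff g a := by
  simp [mixedDiff, mul_add, sum_add_distrib]

theorem mixedDiff_sub (f g : A → ℂ) {k : ℕ} (a : Fin k → A) :
    mixedDiff (f - g) a = mixedDiff f a - mixedDiff g a := by
  simp [mixedDiff, mul_sub, sum_sub_distrib]

theorem mixedDiff_sum {ι : Type*} (s : Finset ι) (f : ι → A → ℂ) {k : ℕ} (a : Fin k → A) :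
    mixedDiff (∑ j ∈ s, f j) a = ∑ j ∈ s, mixedDiff (f j) a := by
  simp only [mixedDiff, Finset.sum_apply, mul_sum]
  exact sum_comm

theorem mixedDiff_comp_perm (μ : A → ℂ) {k : ℕ} (σ : Equiv.Perm (Fin k)) (a : Fin k → A) :
    mixedDiff μ (a ∘ σ) = mixedDiff μ a := by
  refine sum_equiv σ.finsetCongr (by simp) fun S _ => ?_
  simp [Equiv.finsetCongr_apply, sum_map]

theorem isTotallySymmetric_mixedDiff (μ : A → ℂ) (k : ℕ) :
    IsTotallySymmetric (fun a : Fin k → A => mixedDiff μ a) :=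
  mixedDiff_comp_perm μ

theorem isMultiadditive_mixedDiff (μ : A → ℂ) {k : ℕ}
    (hμ : ∀ b : Fin (k + 2) → A, mixedDiff μ b = 0) :
    IsMultiadditive (fun a : Fin (k + 1) → A => mixedDiff μ a) := by
  intro i a x y
  have hsecond : mixedDiff (Δ_[y] (Δ_[x] μ)) (i.removeNth a) = 0 := by
    rw [← mixedDiff_cons, ← mixedDiff_cons, hμ]
  simp only [← Fin.insertNth_removeNth, mixedDiff_insertNth, fwdDiff_add_step, mixedDiff_add,
    hsecond, add_zero]

end MixedDiff

section Diagonal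

variable {A : Type*} {k : ℕ} {Φ : (Fin k → A) → ℂ}

theorem IsTotallySymmetric.const_mul (hΦ : IsTotallySymmetric Φ) (c : ℂ) :
    IsTotallySymmetric (fun a => c * Φ a) := fun σ a => by
  simp only [hΦ σ a]

variable [AddCommGroup A]

def IsMultiadditive.toMultilinearMap (hΦ : IsMultiadditive Φ) :
    MultilinearMap ℕ (fun _ : Fin k => A) ℂ where
  toFun := Φ
  map_update_add' := by
    intro inst m i x y
    obtain rfl : inst = instDecidableEqFin k := Subsingleton.elim _ _
    exact hΦ i m x y
  map_update_smul' := by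
    intro inst m i c x
    obtain rfl : inst = instDecidableEqFin k := Subsingleton.elim _ _
    exact map_nsmul (AddMonoidHom.mk' (fun v => Φ (Function.update m i v)) (hΦ i m)) c x

theorem IsMultiadditive.const_mul (hΦ : IsMultiadditive Φ) (c : ℂ) :
    IsMultiadditive (fun a => c * Φ a) := fun i a x y => by
  simp only [hΦ i a x y, mul_add]

theorem mixedDiff_diag (hΦ : IsMultiadditive Φ) {m : ℕ} (a : Fin m → A) :
    mixedDiff (fun x => Φ (fun _ => x)) a =
      ∑ r : Fin k → Fin m with Function.Surjective r, Φ (a ∘ r) := by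
  have hexpand (S : Finset (Fin m)) : Φ (fun _ => ∑ i ∈ S, a i) =
      ∑ r ∈ Fintype.piFinset fun _ => S, Φ (a ∘ r) :=
    hΦ.toMultilinearMap.map_sum_finset (fun _ => a) (fun _ => S)
  -- After swapping the sums, the signs over the sets `S ⊇ range r` cancel unless `r` is onto.
  simp only [mixedDiff, hexpand, mul_sum]
  rw [sum_comm' (t' := univ) (s' := fun r => univ.powerset.filter (univ.image r ⊆ ·))
    (fun S r => by simp [Fintype.mem_piFinset, image_subset_iff]), sum_filter]
  refine sum_congr rfl fun r _ => ?_
  have hsign := sum_superset_neg_one_pow (R := ℂ) (univ.image r)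
  rw [Fintype.card_fin] at hsign
  rw [← sum_mul, hsign]
  by_cases hr : Function.Surjective r
  · rw [if_pos (image_univ_of_surjective hr), if_pos hr, one_mul]
  · have himage : univ.image r ≠ univ := fun h => hr fun y => by
      simpa using (h.symm ▸ mem_univ y : y ∈ univ.image r)
    rw [if_neg himage, if_neg hr, zero_mul]

theorem mixedDiff_diag_of_lt (hΦ : IsMultiadditive Φ) {m : ℕ} (hkm : k < m) (a : Fin m → A) :
    mixedDiff (fun x => Φ (fun _ => x)) a = 0 := by
  rw [mixedDiff_diag hΦ, sum_eq_zero]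
  intro r hr
  have := Fintype.card_le_of_surjective r (mem_filter.1 hr).2
  simp only [Fintype.card_fin] at this
  omega

theorem mixedDiff_diag_self (hΦ : IsMultiadditive Φ) (hsymm : IsTotallySymmetric Φ)
    (a : Fin k → A) : mixedDiff (fun x => Φ (fun _ => x)) a = k ! * Φ a := by
  have hperm : (univ.filter fun r : Fin k → Fin k => Function.Surjective r) =
      univ.map ⟨_, DFunLike.coe_injective (F := Equiv.Perm (Fin k))⟩ := by
    ext r
    simp only [mem_filter, mem_univ, true_and, mem_map, Function.Embedding.coeFn_mk]
    refine ⟨fun hr => ⟨Equiv.ofBijective r (Finite.surjective_iff_bijective.1 hr), rfl⟩, ?_⟩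
    rintro ⟨σ, rfl⟩
    exact σ.surjective
  rw [mixedDiff_diag hΦ, hperm, sum_map]
  simp [hsymm _ a, Fintype.card_perm]

end Diagonal

section MeasureSpace

variable {A : Type*} [AddCommGroup A] {n : ℕ} {μ : A → ℂ}

theorem mixedDiff_eq_sub_add (μ : A → ℂ) (a : Fin (n + 1) → A) :
    mixedDiff μ a = μ (∑ i, a i) -
      ∑ S ∈ (univ : Finset (Fin (n + 1))).powerset with S.Nonempty ∧ #S ≤ n,
        (-1 : ℂ) ^ (n - #S) * μ (∑ i ∈ S, a i) + (-1) ^ (n + 1) * μ 0 := by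
  have hextreme : (univ : Finset (Fin (n + 1))).powerset.filter
      (fun S => ¬(S.Nonempty ∧ #S ≤ n)) = {univ, ∅} := by
    ext S
    have hS : #S ≤ n + 1 := by simpa using card_le_univ S
    simp only [mem_filter, mem_powerset, subset_univ, true_and, not_and_or,
      not_nonempty_iff_eq_empty, not_le, mem_insert, mem_singleton, ← card_eq_iff_eq_univ,
      Fintype.card_fin]
    rw [or_comm]
    exact or_congr_left (by omega)
  have hmiddle : ∀ S ∈ (univ : Finset (Fin (n + 1))).powerset.filter (fun S => S.Nonempty ∧ #S ≤ n),
      (-1 : ℂ) ^ (n + 1 - #S) * μ (∑ i ∈ S, a i) = -((-1) ^ (n - #S) * μ (∑ i ∈ S, a i)) := by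
    intro S hS
    rw [Nat.succ_sub (mem_filter.1 hS).2.2, pow_succ]
    ring
  rw [mixedDiff, ← sum_filter_add_sum_filter_not _ (fun S => S.Nonempty ∧ #S ≤ n), hextreme,
    sum_pair univ_nonempty.ne_empty, sum_congr rfl hmiddle, sum_neg_distrib]
  simp only [card_univ, Fintype.card_fin, Nat.sub_self, pow_zero, one_mul, card_empty,
    Nat.sub_zero, sum_empty]
  ring

theorem MemMeasureSpace.mixedDiff_eq (hμ : MemMeasureSpace n μ) (a : Fin (n + 1) → A) :
    mixedDiff μ a = (-1) ^ (n + 1) * μ 0 := by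
  rw [mixedDiff_eq_sub_add, ← hμ a, sub_self, zero_add]

theorem MemMeasureSpace.map_zero (hμ : MemMeasureSpace n μ) : μ 0 = 0 := by
  simpa [mixedDiff_cons_zero] using hμ.mixedDiff_eq (Fin.cons 0 0)

theorem MemMeasureSpace.mixedDiff_eq_zero (hμ : MemMeasureSpace n μ) (a : Fin (n + 1) → A) :
    mixedDiff μ a = 0 := by
  rw [hμ.mixedDiff_eq, hμ.map_zero, mul_zero]

end MeasureSpace

section Decomposition

variable {A : Type*} [AddCommGroup A]

def IsHomogeneousDecomposition (f : A → ℂ) {n : ℕ} (Φ : (j : Fin n) → (Fin (j.1 + 1) → A) → ℂ) :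
    Prop :=
  (∀ j : Fin n, IsTotallySymmetric (Φ j) ∧ IsMultiadditive (Φ j)) ∧
    ∀ x : A, f x = ∑ j : Fin n, Φ j (fun _ => x)

namespace IsHomogeneousDecomposition

variable {f : A → ℂ} {n : ℕ}

theorem snoc {Φ : (j : Fin n) → (Fin (j.1 + 1) → A) → ℂ} {Ψ : (Fin (n + 1) → A) → ℂ}
    (hΦ : IsHomogeneousDecomposition (f - fun x => Ψ (fun _ => x)) Φ)
    (hΨsymm : IsTotallySymmetric Ψ) (hΨadd : IsMultiadditive Ψ) :
    IsHomogeneousDecomposition f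
      (Fin.snoc (α := fun j : Fin (n + 1) => (Fin (j.1 + 1) → A) → ℂ) Φ Ψ) := by
  refine ⟨fun j => ?_, fun x => ?_⟩
  · induction j using Fin.lastCases with
    | last => simpa using ⟨hΨsymm, hΨadd⟩
    | cast j => simpa using hΦ.1 j
  · simp [Fin.sum_univ_castSucc, ← hΦ.2 x]

theorem init {Φ : (j : Fin (n + 1)) → (Fin (j.1 + 1) → A) → ℂ}
    (hΦ : IsHomogeneousDecomposition f Φ) :
    IsHomogeneousDecomposition (f - fun x => Φ (Fin.last n) (fun _ => x)) (Fin.init Φ) :=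
  ⟨fun j => hΦ.1 j.castSucc, fun x => by simp [hΦ.2 x, Fin.sum_univ_castSucc, Fin.init]⟩

theorem mixedDiff_eq {Φ : (j : Fin (n + 1)) → (Fin (j.1 + 1) → A) → ℂ}
    (hΦ : IsHomogeneousDecomposition f Φ) (a : Fin (n + 1) → A) :
    mixedDiff f a = (n + 1)! * Φ (Fin.last n) a := by
  have hf : f = ∑ j : Fin (n + 1), fun x => Φ j (fun _ => x) := by
    funext x
    simp [hΦ.2 x]
  rw [hf, mixedDiff_sum, Fin.sum_univ_castSucc, sum_eq_zero, zero_add]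
  · exact mixedDiff_diag_self (hΦ.1 (Fin.last n)).2 (hΦ.1 (Fin.last n)).1 a
  · exact fun j _ => mixedDiff_diag_of_lt (hΦ.1 _).2 (by simp) a

theorem unique {Φ Ψ : (j : Fin n) → (Fin (j.1 + 1) → A) → ℂ}
    (hΦ : IsHomogeneousDecomposition f Φ) (hΨ : IsHomogeneousDecomposition f Ψ) : Φ = Ψ := by
  induction n generalizing f with
  | zero => exact funext fun j => j.elim0
  | succ n ih =>
    have hlast : Φ (Fin.last n) = Ψ (Fin.last n) := funext fun a =>
      mul_left_cancel₀ (Nat.cast_ne_zero.2 (n + 1).factorial_ne_zero)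
        (hΦ.mixedDiff_eq a ▸ hΨ.mixedDiff_eq a)
    have hinit : Fin.init Φ = Fin.init Ψ := ih hΦ.init (hlast ▸ hΨ.init)
    rw [← Fin.snoc_init_self Φ, ← Fin.snoc_init_self Ψ, hinit, hlast]

end IsHomogeneousDecomposition

theorem exists_isHomogeneousDecomposition {n : ℕ} {f : A → ℂ} (hf0 : f 0 = 0)
    (hf : ∀ a : Fin (n + 1) → A, mixedDiff f a = 0) :
    ∃ Φ : (j : Fin n) → (Fin (j.1 + 1) → A) → ℂ, IsHomogeneousDecomposition f Φ := by
  induction n generalizing f with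
  | zero =>
    refine ⟨fun j => j.elim0, fun j => j.elim0, fun x => ?_⟩
    simpa [mixedDiff_cons, mixedDiff_zero_arity, fwdDiff, hf0] using hf (Fin.cons x Fin.elim0)
  | succ n ih =>
    set Ψ : (Fin (n + 1) → A) → ℂ := fun a => ((n + 1)! : ℂ)⁻¹ * mixedDiff f a
    have hΨsymm : IsTotallySymmetric Ψ := (isTotallySymmetric_mixedDiff f _).const_mul _
    have hΨadd : IsMultiadditive Ψ := (isMultiadditive_mixedDiff f hf).const_mul _
    have hrest0 : (f - fun x => Ψ (fun _ => x)) 0 = 0 := by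
      rw [Pi.sub_apply, hf0, show Ψ (fun _ => 0) = 0 from hΨadd.toMultilinearMap.map_zero,
        sub_zero]
    have hrest (a : Fin (n + 1) → A) : mixedDiff (f - fun x => Ψ (fun _ => x)) a = 0 := by
      rw [mixedDiff_sub, mixedDiff_diag_self hΨadd hΨsymm]
      dsimp only [Ψ]
      rw [mul_inv_cancel_left₀ (Nat.cast_ne_zero.2 (n + 1).factorial_ne_zero), sub_self]
    obtain ⟨Φ, hΦ⟩ := ih hrest0 hrest
    exact ⟨_, hΦ.snoc hΨsymm hΨadd⟩

end Decomposition

theorem memMeasureSpace_polynomial_decomposition_general {A : Type*} [AddCommGroup A]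
    (n : ℕ) (μ : A → ℂ) (hμ : MemMeasureSpace n μ) :
    ∃! Φ : (j : Fin n) → (Fin (j.1 + 1) → A) → ℂ,
      (∀ j : Fin n, IsTotallySymmetric (Φ j) ∧ IsMultiadditive (Φ j)) ∧
      ∀ x : A, μ x = ∑ j : Fin n, Φ j (fun _ => x) := by
  obtain ⟨Φ, hΦ⟩ := exists_isHomogeneousDecomposition hμ.map_zero hμ.mixedDiff_eq_zero
  exact ⟨Φ, hΦ, fun Ψ hΨ => IsHomogeneousDecomposition.unique hΨ hΦ⟩

/-- For `n ≥ 2`, every `μ ∈ 𝓜_n(A)` is a polynomial of degree at most `n` in additive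
functionals: there are uniquely determined `Φ_j ∈ Σ_j(A)` (`j = 1,…,n`, indexed here by
`j : Fin n` with `Φ j` of arity `j + 1`), each totally symmetric and additive in every
argument, with `μ(x) = Σ_{j=1}^{n} Φ_j(x,…,x)` for all `x`. -/
theorem memMeasureSpace_polynomial_decomposition {A : Type*} [AddCommGroup A] [Module ℚ A]
    (n : ℕ) (hn : 2 ≤ n) (μ : A → ℂ) (hμ : MemMeasureSpace n μ) :
    ∃! Φ : (j : Fin n) → (Fin (j.1 + 1) → A) → ℂ,
      (∀ j : Fin n, IsTotallySymmetric (Φ j) ∧ IsMultiadditive (Φ j)) ∧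
      ∀ x : A, μ x = ∑ j : Fin n, Φ j (fun _ => x) :=
  memMeasureSpace_polynomial_decomposition_general n μ hμ
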